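/- For J-periodic sequences V and W, the summation-by-parts identity (φ(V,V), W)_h = −h·∑_{i=1}^J (V_i² + V_i·V_{i+1} + V_{i+1}²)·(W_{i+1} − W_i) holds. -/
import Mathlib

lemma shift_sum (J : ℕ) (hJ : 1 ≤ J) (g : ℤ → ℝ) (hg : ∀ i : ℤ, g (i + J) = g i) :
    ∑ i ∈ Finset.range J, g ((i : ℤ) - 1) = ∑ i ∈ Finset.range J, g (i : ℤ) := by
  obtain ⟨K, rfl⟩ := Nat.exists_eq_add_of_le hJ
  simp only [Nat.add_comm 1 K]
  rw [Finset.sum_range_succ' (fun i => g ((i : ℤ) - 1)), Finset.sum_range_succ]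
  have h1 : ∀ i : ℕ, g (((i + 1 : ℕ) : ℤ) - 1) = g (i : ℤ) := by
    intro i; push_cast; ring_nf
  simp only [h1]
  congr 1
  have h2 := hg (-1)
  rw [show ((0 : ℕ) : ℤ) - 1 = -1 by norm_num, ← h2]
  congr 1
  push_cast
  ring

theorem stmt_4 (J : ℕ) (hJ : 1 ≤ J) (h : ℝ) (hh : 0 < h)
    (V W : ℤ → ℝ) (hV : ∀ i : ℤ, V (i + J) = V i) (hW : ∀ i : ℤ, W (i + J) = W i) :
    h * ∑ i ∈ Finset.range J,
        ((V ((i : ℤ) - 1) + V (i : ℤ) + V ((i : ℤ) + 1)) * (V ((i : ℤ) + 1) - V ((i : ℤ) - 1))) * W (i : ℤ)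
      = -(h * ∑ i ∈ Finset.range J,
          (V (i : ℤ) ^ 2 + V (i : ℤ) * V ((i : ℤ) + 1) + V ((i : ℤ) + 1) ^ 2) *
            (W ((i : ℤ) + 1) - W (i : ℤ))) := by
  set F : ℤ → ℝ := fun i => V i ^ 2 + V i * V (i + 1) + V (i + 1) ^ 2 with hF
  set g : ℤ → ℝ := fun i => F i * W (i + 1) with hg
  have hgp : ∀ i : ℤ, g (i + J) = g i := by
    intro i
    simp only [hg, hF]
    have h1 : i + (J : ℤ) + 1 = (i + 1) + (J : ℤ) := by ring
    rw [h1, hV i, hV (i + 1), hW (i + 1)]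
  have key := shift_sum J hJ g hgp
  have expand : ∀ i : ℤ,
      ((V (i - 1) + V i + V (i + 1)) * (V (i + 1) - V (i - 1))) * W i
        = F i * W i - g (i - 1) := by
    intro i
    simp only [hg, hF, sub_add_cancel]
    ring
  calc h * ∑ i ∈ Finset.range J,
        ((V ((i : ℤ) - 1) + V (i : ℤ) + V ((i : ℤ) + 1)) * (V ((i : ℤ) + 1) - V ((i : ℤ) - 1))) * W (i : ℤ)
      = h * ∑ i ∈ Finset.range J, (F (i : ℤ) * W (i : ℤ) - g ((i : ℤ) - 1)) := by
        congr 1; exact Finset.sum_congr rfl fun i _ => expand i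
    _ = h * (∑ i ∈ Finset.range J, F (i : ℤ) * W (i : ℤ) - ∑ i ∈ Finset.range J, g ((i : ℤ) - 1)) := by
        rw [Finset.sum_sub_distrib]
    _ = -(h * ∑ i ∈ Finset.range J, F (i : ℤ) * (W ((i : ℤ) + 1) - W (i : ℤ))) := by
        rw [key]
        rw [show (∑ i ∈ Finset.range J, F (i : ℤ) * (W ((i : ℤ) + 1) - W (i : ℤ)))
            = ∑ i ∈ Finset.range J, (g (i : ℤ) - F (i : ℤ) * W (i : ℤ)) from
          Finset.sum_congr rfl fun i _ => by simp only [hg]; ring]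
        rw [Finset.sum_sub_distrib]
        ring
    _ = -(h * ∑ i ∈ Finset.range J,
          (V (i : ℤ) ^ 2 + V (i : ℤ) * V ((i : ℤ) + 1) + V ((i : ℤ) + 1) ^ 2) *
            (W ((i : ℤ) + 1) - W (i : ℤ))) := rfl
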